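/- Let p be an odd prime and let G be a GGS-group with defining vector e satisfying λ = e_1 + ... + e_{p-1} ≠ 0. Let g ∈ G satisfy g ≡_{G'} a^i b^j with i ≠ 0, and write g = a^i · ψ^{-1}((g_1,...,g_p)). Then g^p ∈ st_G(1), and for every u ∈ X one has φ_u(g^p) ≡_{G'} a^{λj} b^j and |φ_u(g^p)| ≤ |g_1| + ... + |g_p| ≤ |g|. -/

import Mathlib

open List

/-- The automorphism group of the `p`-adic rooted tree: vertices are finite words
over the alphabet `ZMod p` (the letter `i ∈ {1,…,p-1}` is `i` and the letter `p` is `0`),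
and automorphisms are the permutations of the vertex set preserving word length and
the prefix relation. -/
def AutT (p : ℕ) : Subgroup (Equiv.Perm (List (ZMod p))) where
  carrier := {σ | (∀ v, (σ v).length = v.length) ∧
      ∀ u v : List (ZMod p), u <+: v → σ u <+: σ v}
  one_mem' := ⟨fun _ => rfl, fun _ _ h => h⟩
  mul_mem' := by
    rintro σ τ ⟨hσ1, hσ2⟩ ⟨hτ1, hτ2⟩
    refine ⟨fun v => ?_, fun u v h => ?_⟩
    · simp only [Equiv.Perm.mul_apply, hσ1, hτ1]
    · simpa only [Equiv.Perm.mul_apply] using hσ2 _ _ (hτ2 _ _ h)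
  inv_mem' := by
    rintro σ ⟨h1, h2⟩
    have hlen : ∀ v, (σ⁻¹ v).length = v.length := by
      intro v
      have := h1 (σ⁻¹ v)
      rw [show σ (σ⁻¹ v) = v from σ.apply_symm_apply v] at this
      exact this.symm
    refine ⟨hlen, fun u v huv => ?_⟩
    have hle : u.length ≤ (σ⁻¹ v).length := by
      rw [hlen]; exact huv.length_le
    have htake : (σ⁻¹ v).take u.length <+: σ⁻¹ v := List.take_prefix _ _
    have h3 : σ ((σ⁻¹ v).take u.length) <+: v := by
      have := h2 _ _ htake
      rwa [show σ (σ⁻¹ v) = v from σ.apply_symm_apply v] at this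
    have hlen2 : (σ ((σ⁻¹ v).take u.length)).length = u.length := by
      rw [h1, List.length_take]
      omega
    have heq : σ ((σ⁻¹ v).take u.length) = u := by
      refine List.IsPrefix.eq_of_length ?_ (by rw [hlen2])
      exact List.prefix_of_prefix_length_le h3 huv (by rw [hlen2])
    have h4 : σ⁻¹ u = (σ⁻¹ v).take u.length := by
      conv_lhs => rw [← heq]
      exact Equiv.symm_apply_apply _ _
    rw [h4]; exact htake

lemma mem_AutT_iff {p : ℕ} {σ : Equiv.Perm (List (ZMod p))} :
    σ ∈ AutT p ↔ (∀ v, (σ v).length = v.length) ∧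
      ∀ u v : List (ZMod p), u <+: v → σ u <+: σ v := Iff.rfl

lemma autT_apply_append (p : ℕ) (f : Equiv.Perm (List (ZMod p))) (hf : f ∈ AutT p)
    (u v : List (ZMod p)) : f (u ++ v) = f u ++ (f (u ++ v)).drop u.length := by
  rw [mem_AutT_iff] at hf
  have hpre : f u <+: f (u ++ v) := hf.2 u (u ++ v) ⟨v, rfl⟩
  have := List.prefix_iff_eq_append.mp hpre
  rw [hf.1 u] at this
  exact this.symm

/-- The section (state) of a tree automorphism at the vertex `u`, as a permutation of
the subtree rooted at `u` (identified with the whole tree). -/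
def secEquiv (p : ℕ) (f : ↥(AutT p)) (u : List (ZMod p)) : Equiv.Perm (List (ZMod p)) where
  toFun v := ((f : Equiv.Perm (List (ZMod p))) (u ++ v)).drop u.length
  invFun v := (((f⁻¹ : ↥(AutT p)) : Equiv.Perm (List (ZMod p)))
      (((f : Equiv.Perm (List (ZMod p))) u) ++ v)).drop u.length
  left_inv v := by
    dsimp only
    have key := autT_apply_append p (f : Equiv.Perm (List (ZMod p))) f.2 u v
    rw [← key]
    have h1 : ((f⁻¹ : ↥(AutT p)) : Equiv.Perm (List (ZMod p)))
        ((f : Equiv.Perm (List (ZMod p))) (u ++ v)) = u ++ v := by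
      rw [InvMemClass.coe_inv]
      exact Equiv.symm_apply_apply _ _
    rw [h1, List.drop_left]
  right_inv v := by
    dsimp only
    have hg := (f⁻¹ : ↥(AutT p)).2
    rw [mem_AutT_iff] at hg
    have h1 : ((f⁻¹ : ↥(AutT p)) : Equiv.Perm (List (ZMod p)))
        ((f : Equiv.Perm (List (ZMod p))) u) = u := by
      rw [InvMemClass.coe_inv]
      exact Equiv.symm_apply_apply _ _
    have hpre : u <+: ((f⁻¹ : ↥(AutT p)) : Equiv.Perm (List (ZMod p)))
        (((f : Equiv.Perm (List (ZMod p))) u) ++ v) := by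
      have := hg.2 ((f : Equiv.Perm (List (ZMod p))) u)
        (((f : Equiv.Perm (List (ZMod p))) u) ++ v) ⟨v, rfl⟩
      rwa [h1] at this
    have hw := List.prefix_iff_eq_append.mp hpre
    rw [hw]
    have h2 : (f : Equiv.Perm (List (ZMod p)))
        (((f⁻¹ : ↥(AutT p)) : Equiv.Perm (List (ZMod p)))
          (((f : Equiv.Perm (List (ZMod p))) u) ++ v))
        = ((f : Equiv.Perm (List (ZMod p))) u) ++ v := by
      rw [InvMemClass.coe_inv]
      exact Equiv.apply_symm_apply _ _
    rw [h2]
    have hlu : ((f : Equiv.Perm (List (ZMod p))) u).length = u.length :=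
      ((mem_AutT_iff).mp f.2).1 u
    rw [← hlu, List.drop_left]

lemma secEquiv_mem (p : ℕ) (f : ↥(AutT p)) (u : List (ZMod p)) :
    secEquiv p f u ∈ AutT p := by
  rw [mem_AutT_iff]
  obtain ⟨h1, h2⟩ := (mem_AutT_iff).mp f.2
  constructor
  · intro v
    show (((f : Equiv.Perm (List (ZMod p))) (u ++ v)).drop u.length).length = v.length
    rw [List.length_drop, h1, List.length_append]
    omega
  · intro v w hvw
    show ((f : Equiv.Perm (List (ZMod p))) (u ++ v)).drop u.length <+:
      ((f : Equiv.Perm (List (ZMod p))) (u ++ w)).drop u.length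
    have hp : (f : Equiv.Perm (List (ZMod p))) (u ++ v) <+:
        (f : Equiv.Perm (List (ZMod p))) (u ++ w) := by
      apply h2
      obtain ⟨t, rfl⟩ := hvw
      exact ⟨t, by rw [List.append_assoc]⟩
    obtain ⟨t, ht⟩ := hp
    have hle : u.length ≤ ((f : Equiv.Perm (List (ZMod p))) (u ++ v)).length := by
      rw [h1, List.length_append]; omega
    exact ⟨t, by rw [← List.drop_append_of_le_length hle, ht]⟩

/-- `sectionAt p f u = φ_u(f)`, the section of `f` at vertex `u`, as a tree automorphism. -/
def sectionAt (p : ℕ) (f : ↥(AutT p)) (u : List (ZMod p)) : ↥(AutT p) :=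
  ⟨secEquiv p f u, secEquiv_mem p f u⟩

/-- Add `k` to the first letter of a word (identity on the empty word). -/
def addFirst (p : ℕ) (k : ZMod p) : List (ZMod p) → List (ZMod p)
  | [] => []
  | x :: v => (x + k) :: v

lemma addFirst_addFirst (p : ℕ) (k l : ZMod p) (v : List (ZMod p)) :
    addFirst p k (addFirst p l v) = addFirst p (l + k) v := by
  cases v with
  | nil => rfl
  | cons x w => show (x + l + k) :: w = (x + (l + k)) :: w; rw [add_assoc]

lemma addFirst_zero (p : ℕ) (v : List (ZMod p)) : addFirst p 0 v = v := by
  cases v with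
  | nil => rfl
  | cons x w => show (x + 0) :: w = x :: w; rw [add_zero]

lemma addFirst_length (p : ℕ) (k : ZMod p) (v : List (ZMod p)) :
    (addFirst p k v).length = v.length := by
  cases v <;> rfl

/-- The rooted automorphism corresponding to the `p`-cycle `(1 2 ⋯ p)`:
it adds `1` to the first letter of every nonempty word. -/
def aPerm (p : ℕ) : Equiv.Perm (List (ZMod p)) where
  toFun := addFirst p 1
  invFun := addFirst p (-1)
  left_inv v := by rw [addFirst_addFirst, add_neg_cancel, addFirst_zero]
  right_inv v := by rw [addFirst_addFirst, neg_add_cancel, addFirst_zero]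

lemma addFirst_prefix (p : ℕ) (k : ZMod p) (u t : List (ZMod p)) :
    addFirst p k u <+: addFirst p k (u ++ t) := by
  cases u with
  | nil => exact List.nil_prefix
  | cons x w => exact ⟨t, rfl⟩

lemma aPerm_mem (p : ℕ) : aPerm p ∈ AutT p := by
  rw [mem_AutT_iff]
  refine ⟨fun v => addFirst_length p 1 v, ?_⟩
  rintro u v ⟨t, rfl⟩
  exact addFirst_prefix p 1 u t

/-- The rooted generator `a` of a GGS-group. -/
def aA (p : ℕ) : ↥(AutT p) := ⟨aPerm p, aPerm_mem p⟩

/-- The underlying function of the directed automorphism `b` with defining vector `e`. -/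
def bFun (p : ℕ) [NeZero p] (e : Fin (p - 1) → ZMod p) : List (ZMod p) → List (ZMod p)
  | [] => []
  | x :: v =>
    if h : x.val = 0 then x :: bFun p e v
    else x :: addFirst p (e ⟨x.val - 1, by have := ZMod.val_lt x; omega⟩) v

lemma bFun_cons (p : ℕ) [NeZero p] (e : Fin (p - 1) → ZMod p) (x : ZMod p)
    (v : List (ZMod p)) :
    bFun p e (x :: v) = if h : x.val = 0 then x :: bFun p e v
      else x :: addFirst p (e ⟨x.val - 1, by have := ZMod.val_lt x; omega⟩) v := rfl

lemma bFun_bFun (p : ℕ) [NeZero p] (e f : Fin (p - 1) → ZMod p)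
    (h : ∀ j, e j + f j = 0) (v : List (ZMod p)) : bFun p f (bFun p e v) = v := by
  induction v with
  | nil => rfl
  | cons x w ih =>
    by_cases hx : x.val = 0
    · rw [bFun_cons, dif_pos hx, bFun_cons, dif_pos hx, ih]
    · rw [bFun_cons, dif_neg hx, bFun_cons, dif_neg hx, addFirst_addFirst, h, addFirst_zero]

/-- The directed automorphism `b` with defining vector `e`, as a permutation:
`ψ(b) = (a^{e_1}, …, a^{e_{p-1}}, b)`. -/
def bPerm (p : ℕ) [NeZero p] (e : Fin (p - 1) → ZMod p) : Equiv.Perm (List (ZMod p)) where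
  toFun := bFun p e
  invFun := bFun p (fun j => -e j)
  left_inv v := bFun_bFun p e _ (fun j => add_neg_cancel _) v
  right_inv v := bFun_bFun p _ e (fun j => neg_add_cancel _) v

lemma bFun_length (p : ℕ) [NeZero p] (e : Fin (p - 1) → ZMod p) (v : List (ZMod p)) :
    (bFun p e v).length = v.length := by
  induction v with
  | nil => rfl
  | cons x w ih =>
    by_cases hx : x.val = 0
    · rw [bFun_cons, dif_pos hx]; simpa using ih
    · rw [bFun_cons, dif_neg hx]; simp [addFirst_length]

lemma bPerm_mem (p : ℕ) [NeZero p] (e : Fin (p - 1) → ZMod p) : bPerm p e ∈ AutT p := by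
  rw [mem_AutT_iff]
  refine ⟨fun v => bFun_length p e v, ?_⟩
  rintro u v ⟨t, rfl⟩
  show bFun p e u <+: bFun p e (u ++ t)
  induction u with
  | nil => exact List.nil_prefix
  | cons x w ih =>
    by_cases hx : x.val = 0
    · rw [List.cons_append, bFun_cons, dif_pos hx, bFun_cons, dif_pos hx]
      exact List.cons_prefix_cons.mpr ⟨rfl, ih⟩
    · rw [List.cons_append, bFun_cons, dif_neg hx, bFun_cons, dif_neg hx]
      exact List.cons_prefix_cons.mpr ⟨rfl, addFirst_prefix p _ w t⟩

/-- The directed generator `b` of the GGS-group with defining vector `e`. -/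
def bA (p : ℕ) [NeZero p] (e : Fin (p - 1) → ZMod p) : ↥(AutT p) :=
  ⟨bPerm p e, bPerm_mem p e⟩

/-- The GGS-group `G = ⟨a, b⟩ ≤ Aut T` with defining vector `e`. -/
def GGS (p : ℕ) [NeZero p] (e : Fin (p - 1) → ZMod p) : Subgroup ↥(AutT p) :=
  Subgroup.closure {aA p, bA p e}

lemma aA_mem_GGS (p : ℕ) [NeZero p] (e : Fin (p - 1) → ZMod p) : aA p ∈ GGS p e :=
  Subgroup.subset_closure (Set.mem_insert _ _)

lemma bA_mem_GGS (p : ℕ) [NeZero p] (e : Fin (p - 1) → ZMod p) : bA p e ∈ GGS p e :=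
  Subgroup.subset_closure (Set.mem_insert_of_mem _ rfl)

/-- `a^n` for an exponent `n ∈ F_p`. -/
def aZ (p : ℕ) (n : ZMod p) : ↥(AutT p) := aA p ^ n.val

/-- `b^m` for an exponent `m ∈ F_p`. -/
def bZ (p : ℕ) [NeZero p] (e : Fin (p - 1) → ZMod p) (m : ZMod p) : ↥(AutT p) :=
  bA p e ^ m.val

/-- The length `|g|` of an element of the GGS-group with defining vector `e`:
the minimal number `m` of `b`-syllables in an expression
`g = a^{α_1} b^{β_1} a^{α_2} ⋯ b^{β_m} a^{α_{m+1}}`. -/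
noncomputable def glen (p : ℕ) [NeZero p] (e : Fin (p - 1) → ZMod p) (g : ↥(AutT p)) : ℕ :=
  sInf {m : ℕ | ∃ (α : Fin (m + 1) → ZMod p) (β : Fin m → ZMod p),
    g = aZ p (α 0) * (List.ofFn fun i : Fin m => bZ p e (β i) * aZ p (α i.succ)).prod}

/-- An element of `Aut T` fixes all first-level vertices, i.e. lies in `st(1)`. -/
def FixesLevelOne (p : ℕ) (f : ↥(AutT p)) : Prop :=
  ∀ x : ZMod p, (f : Equiv.Perm (List (ZMod p))) [x] = [x]


/-!
Two functions on `G` are additive and vanish on `G'`: the translation `shift g` by which `g` acts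
on the first level, and the sum `secShiftSum g` of the translations of its first-level sections
(`a ↦ (1, 0)`, `b ↦ (0, λ)`); as `λ ≠ 0` they pin down the class of an element modulo `G'`.
If `shift g = i ≠ 0`, the section of `g^p` at `u` is the product of the sections of `g` at
`u, u + i, …, u + (p-1)i`, i.e. of all `p` first-level sections of `g` in some order. So its
length is at most `|g_1| + ⋯ + |g_p|`, which is at most `|g|` because each `b`-syllable of a word
for `g` lands in exactly one section; and its invariants are `∑ₓ shift g_x = secShiftSum g = λj`
and `∑ₓ secShiftSum g_x = secShiftSum g = λj`, the last identity because both sides are additive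
and agree on `a` and `b`.
-/

namespace GGS

section Tree

variable {p : ℕ}

@[ext]
lemma autT_ext {f g : ↥(AutT p)} (h : ∀ v, f.1 v = g.1 v) : f = g :=
  Subtype.ext (Equiv.ext h)

lemma coe_mul_apply (f g : ↥(AutT p)) (v : List (ZMod p)) : (f * g).1 v = f.1 (g.1 v) := rfl

lemma coe_one_apply (v : List (ZMod p)) : (1 : ↥(AutT p)).1 v = v := rfl

lemma coe_apply_nil (f : ↥(AutT p)) : f.1 [] = [] := List.eq_nil_of_length_eq_zero (f.2.1 [])

lemma aA_pow_apply (n : ℕ) (v : List (ZMod p)) : (aA p ^ n).1 v = addFirst p n v := by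
  induction n generalizing v with
  | zero => rw [pow_zero, Nat.cast_zero, addFirst_zero]; rfl
  | succ n ih =>
    rw [pow_succ', coe_mul_apply, ih, Nat.cast_succ]
    exact addFirst_addFirst p 1 n v

lemma aZ_zero : aZ p 0 = 1 := by rw [aZ, ZMod.val_zero, pow_zero]

end Tree

section Generators

variable {p : ℕ} [NeZero p] {e : Fin (p - 1) → ZMod p}

lemma aZ_apply (c : ZMod p) (v : List (ZMod p)) : (aZ p c).1 v = addFirst p c v := by
  rw [aZ, aA_pow_apply, ZMod.natCast_zmod_val]

lemma aZ_add (c d : ZMod p) : aZ p (c + d) = aZ p c * aZ p d := by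
  ext v : 1
  rw [coe_mul_apply, aZ_apply, aZ_apply, aZ_apply, addFirst_addFirst, add_comm]

/-- The exponent `e_x` of `a` in the section of `b` at a vertex `x ≠ 0`; at the vertex `0` (the
paper's `p`) the section of `b` is `b` itself, and the value is `0`. -/
def bExp (e : Fin (p - 1) → ZMod p) (x : ZMod p) : ZMod p :=
  if h : x.val = 0 then 0 else e ⟨x.val - 1, by have := ZMod.val_lt x; omega⟩

lemma bExp_zero : bExp e 0 = 0 := dif_pos ZMod.val_zero

lemma sum_bExp : ∑ x, bExp e x = ∑ i, e i := by
  obtain ⟨n, rfl⟩ := Nat.exists_eq_succ_of_ne_zero (NeZero.ne p)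
  -- `ZMod (n + 1)` is `Fin (n + 1)` by definition.
  refine (Fin.sum_univ_succ (bExp e)).trans ?_
  change bExp e (0 : ZMod (n + 1)) + _ = _
  rw [bExp_zero, zero_add]
  exact Fintype.sum_congr _ _ fun i => dif_neg (Nat.succ_ne_zero i)

lemma bFun_cons_eq_ite (x : ZMod p) (v : List (ZMod p)) :
    bFun p e (x :: v) = x :: if x = 0 then bFun p e v else addFirst p (bExp e x) v := by
  by_cases hx : x = 0
  · subst hx
    rw [if_pos rfl, bFun_cons, dif_pos ZMod.val_zero]
  · have hv : x.val ≠ 0 := (ZMod.val_ne_zero x).mpr hx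
    rw [if_neg hx, bFun_cons, dif_neg hv, bExp, dif_neg hv]

lemma bZ_apply_cons (c x : ZMod p) (w : List (ZMod p)) :
    (bZ p e c).1 (x :: w) = x :: if x = 0 then (bZ p e c).1 w else addFirst p (c * bExp e x) w := by
  suffices ∀ n : ℕ, (bA p e ^ n).1 (x :: w) =
      x :: if x = 0 then (bA p e ^ n).1 w else addFirst p (n * bExp e x) w by
    rw [bZ, this, ZMod.natCast_zmod_val]
  intro n
  induction n with
  | zero => split_ifs <;> simp [addFirst_zero]
  | succ n ih =>
    rw [pow_succ', coe_mul_apply, ih, coe_mul_apply]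
    change bFun p e _ = _
    rw [bFun_cons_eq_ite]
    split_ifs
    · rfl
    · rw [addFirst_addFirst, Nat.cast_succ, add_one_mul]

lemma bZ_add (c d : ZMod p) : bZ p e (c + d) = bZ p e c * bZ p e d := by
  ext v : 1
  induction v with
  | nil => simp only [coe_apply_nil]
  | cons x w ih =>
    rw [coe_mul_apply, bZ_apply_cons, bZ_apply_cons, bZ_apply_cons]
    split_ifs
    · rw [ih, coe_mul_apply]
    · rw [addFirst_addFirst, add_mul, add_comm]

lemma bZ_zero : bZ p e 0 = 1 := by rw [bZ, ZMod.val_zero, pow_zero]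

lemma aZ_neg (c : ZMod p) : aZ p (-c) = (aZ p c)⁻¹ := by
  rw [eq_inv_iff_mul_eq_one, ← aZ_add, neg_add_cancel, aZ_zero]

lemma bZ_neg (c : ZMod p) : bZ p e (-c) = (bZ p e c)⁻¹ := by
  rw [eq_inv_iff_mul_eq_one, ← bZ_add, neg_add_cancel, bZ_zero]

lemma aZ_one : aZ p 1 = aA p := by
  ext v : 1
  rw [aZ_apply]
  rfl

lemma bZ_one : bZ p e 1 = bA p e := by
  ext v : 1
  induction v with
  | nil => simp only [coe_apply_nil]
  | cons x w ih =>
    rw [bZ_apply_cons, ih, one_mul]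
    exact (bFun_cons_eq_ite x w).symm

lemma aZ_mem (c : ZMod p) : aZ p c ∈ GGS p e := pow_mem (aA_mem_GGS p e) _

lemma bZ_mem (c : ZMod p) : bZ p e c ∈ GGS p e := pow_mem (bA_mem_GGS p e) _

@[elab_as_elim]
lemma induction_on {P : ↥(AutT p) → Prop} {g : ↥(AutT p)} (hg : g ∈ GGS p e) (one : P 1)
    (aZ_mul : ∀ c y, y ∈ GGS p e → P y → P (aZ p c * y))
    (bZ_mul : ∀ c y, y ∈ GGS p e → P y → P (bZ p e c * y)) : P g := by
  induction hg using Subgroup.closure_induction_left with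
  | one => exact one
  | mul_left x hx y hy ih =>
    rcases hx with rfl | rfl
    · simpa only [aZ_one] using aZ_mul 1 y hy ih
    · simpa only [bZ_one] using bZ_mul 1 y hy ih
  | inv_mul_cancel x hx y hy ih =>
    rcases hx with rfl | rfl
    · simpa only [aZ_neg, aZ_one] using aZ_mul (-1) y hy ih
    · simpa only [bZ_neg, bZ_one] using bZ_mul (-1) y hy ih

end Generators

section Sections

variable {p : ℕ}

def HasShift (f : ↥(AutT p)) (c : ZMod p) : Prop := ∀ x : ZMod p, f.1 [x] = [x + c]

/-- Meaningful only when `f` acts on the first level by a translation (`HasShift`). -/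
def shift (f : ↥(AutT p)) : ZMod p := (f.1 [0]).headI

lemma HasShift.shift_eq {f : ↥(AutT p)} {c : ZMod p} (hf : HasShift f c) : shift f = c := by
  rw [shift, hf 0, zero_add, List.headI_cons]

lemma hasShift_one : HasShift (1 : ↥(AutT p)) 0 := fun x => by rw [coe_one_apply, add_zero]

lemma HasShift.mul {f g : ↥(AutT p)} {c d : ZMod p} (hf : HasShift f c) (hg : HasShift g d) :
    HasShift (f * g) (c + d) := fun x => by rw [coe_mul_apply, hg, hf, add_right_comm, add_assoc]

lemma HasShift.pow {f : ↥(AutT p)} {c : ZMod p} (hf : HasShift f c) (n : ℕ) :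
    HasShift (f ^ n) (n • c) := by
  induction n with
  | zero => rw [pow_zero, zero_smul]; exact hasShift_one
  | succ n ih => rw [pow_succ', succ_nsmul']; exact hf.mul ih

def sec (f : ↥(AutT p)) (x : ZMod p) : ↥(AutT p) := sectionAt p f [x]

lemma sec_apply (f : ↥(AutT p)) (x : ZMod p) (v : List (ZMod p)) :
    (sec f x).1 v = (f.1 (x :: v)).drop 1 := rfl

lemma sec_one (x : ZMod p) : sec (1 : ↥(AutT p)) x = 1 := rfl

lemma HasShift.apply_cons {f : ↥(AutT p)} {c : ZMod p} (hf : HasShift f c) (x : ZMod p)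
    (v : List (ZMod p)) : f.1 (x :: v) = (x + c) :: (sec f x).1 v := by
  have h := autT_apply_append p f.1 f.2 [x] v
  rw [hf x] at h
  exact h

lemma sec_mul (f : ↥(AutT p)) {g : ↥(AutT p)} {d : ZMod p} (hg : HasShift g d) (x : ZMod p) :
    sec (f * g) x = sec f (x + d) * sec g x := by
  ext v : 1
  rw [sec_apply, coe_mul_apply, hg.apply_cons, coe_mul_apply]
  rfl

lemma sec_pow_succ {g : ↥(AutT p)} {c : ZMod p} (hg : HasShift g c) (n : ℕ) (u : ZMod p) :
    sec (g ^ (n + 1)) u = sec g (u + n • c) * sec (g ^ n) u := by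
  rw [pow_succ', sec_mul g (hg.pow n)]

end Sections

section GeneratorSections

variable {p : ℕ} [NeZero p] {e : Fin (p - 1) → ZMod p}

lemma hasShift_aZ (c : ZMod p) : HasShift (aZ p c) c := fun x => by rw [aZ_apply]; rfl

lemma hasShift_bZ (c : ZMod p) : HasShift (bZ p e c) 0 := fun x => by
  rw [bZ_apply_cons, add_zero]
  split_ifs
  · rw [coe_apply_nil]
  · rfl

lemma sec_aZ (c x : ZMod p) : sec (aZ p c) x = 1 := by
  ext v : 1
  rw [sec_apply, aZ_apply]
  rfl

lemma sec_bZ (c x : ZMod p) :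
    sec (bZ p e c) x = if x = 0 then bZ p e c else aZ p (c * bExp e x) := by
  ext v : 1
  rw [sec_apply, bZ_apply_cons, List.drop_one, List.tail_cons]
  split_ifs
  · rfl
  · rw [aZ_apply]

end GeneratorSections

section AddOn

open scoped commutatorElement

variable {α M : Type*} [Group α] [AddCommGroup M]

def IsAddOn (H : Subgroup α) (φ : α → M) : Prop :=
  ∀ f ∈ H, ∀ g ∈ H, φ (f * g) = φ f + φ g

variable {H : Subgroup α} {φ ψ : α → M}

lemma IsAddOn.map_one (hφ : IsAddOn H φ) : φ 1 = 0 := by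
  simpa using hφ 1 H.one_mem 1 H.one_mem

lemma IsAddOn.map_inv (hφ : IsAddOn H φ) {g : α} (hg : g ∈ H) : φ g⁻¹ = -φ g := by
  rw [eq_neg_iff_add_eq_zero, add_comm, ← hφ g hg _ (H.inv_mem hg), mul_inv_cancel, hφ.map_one]

lemma IsAddOn.eqOn_closure {s : Set α} (hφ : IsAddOn (Subgroup.closure s) φ)
    (hψ : IsAddOn (Subgroup.closure s) ψ) (h : Set.EqOn φ ψ s) :
    Set.EqOn φ ψ (Subgroup.closure s) := by
  intro g hg
  induction hg using Subgroup.closure_induction'' with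
  | mem x hx => exact h hx
  | inv_mem x hx =>
    have hx' := Subgroup.subset_closure hx
    rw [hφ.map_inv hx', hψ.map_inv hx', h hx]
  | one => rw [hφ.map_one, hψ.map_one]
  | mul x y hx hy ihx ihy => rw [hφ x hx y hy, hψ x hx y hy, ihx, ihy]

lemma IsAddOn.eq_zero_of_mem_commutator (hφ : IsAddOn H φ) {k : α} (hk : k ∈ ⁅H, H⁆) :
    φ k = 0 := by
  let f : H →* Multiplicative M := MonoidHom.mk' (fun h => .ofAdd (φ h))
    fun a b => congrArg Multiplicative.ofAdd (hφ a a.2 b b.2)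
  rw [← H.map_subtype_commutator] at hk
  obtain ⟨k, hk, rfl⟩ := hk
  exact Multiplicative.ofAdd.injective (Abelianization.commutator_subset_ker f hk)

lemma IsAddOn.eq_of_mul_inv_mem_commutator (hφ : IsAddOn H φ) {g h : α} (hh : h ∈ H)
    (hgh : g * h⁻¹ ∈ ⁅H, H⁆) : φ g = φ h := by
  have hk := H.commutator_le_self hgh
  rw [← inv_mul_cancel_right g h, hφ _ hk h hh, hφ.eq_zero_of_mem_commutator hgh, zero_add]

lemma conj_mem_commutator {g k : α} (hg : g ∈ H) (hk : k ∈ ⁅H, H⁆) : g * k * g⁻¹ ∈ ⁅H, H⁆ := by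
  rw [show g * k * g⁻¹ = ⁅g, k⁆ * k by group]
  exact mul_mem (Subgroup.commutator_mem_commutator hg (H.commutator_le_self hk)) hk

end AddOn

section SelfSimilar

variable {p : ℕ} [NeZero p] {e : Fin (p - 1) → ZMod p}

lemma hasShift_shift {g : ↥(AutT p)} (hg : g ∈ GGS p e) : HasShift g (shift g) := by
  refine induction_on hg
    (hasShift_one.shift_eq ▸ hasShift_one)
    (fun c y _ hy => ?_) (fun c y _ hy => ?_)
  · exact ((hasShift_aZ c).mul hy).shift_eq ▸ (hasShift_aZ c).mul hy
  · exact ((hasShift_bZ c).mul hy).shift_eq ▸ (hasShift_bZ c).mul hy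

lemma sec_aZ_mul (c : ZMod p) {g : ↥(AutT p)} (hg : g ∈ GGS p e) (x : ZMod p) :
    sec (aZ p c * g) x = sec g x := by
  rw [sec_mul _ (hasShift_shift hg), sec_aZ, one_mul]

lemma sec_bZ_mem (c x : ZMod p) : sec (bZ p e c) x ∈ GGS p e := by
  rw [sec_bZ]
  split_ifs
  exacts [bZ_mem c, aZ_mem _]

lemma sec_mem {g : ↥(AutT p)} (hg : g ∈ GGS p e) (x : ZMod p) : sec g x ∈ GGS p e := by
  revert x
  refine induction_on hg (fun x => ?_) (fun c y hy ih x => ?_) (fun c y hy ih x => ?_)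
  · rw [sec_one]
    exact one_mem _
  · rw [sec_aZ_mul c hy]
    exact ih x
  · rw [sec_mul _ (hasShift_shift hy)]
    exact mul_mem (sec_bZ_mem c _) (ih x)

lemma isAddOn_shift : IsAddOn (GGS p e) shift :=
  fun _ hf _ hg => ((hasShift_shift hf).mul (hasShift_shift hg)).shift_eq

lemma IsAddOn.sum_sec {M : Type*} [AddCommGroup M] {φ : ↥(AutT p) → M}
    (hφ : IsAddOn (GGS p e) φ) : IsAddOn (GGS p e) fun f => ∑ x, φ (sec f x) := by
  intro f hf g hg
  simp only [sec_mul f (hasShift_shift hg), hφ _ (sec_mem hf _) _ (sec_mem hg _),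
    Finset.sum_add_distrib]
  congr 1
  exact Equiv.sum_comp (Equiv.addRight (shift g)) fun x => φ (sec f x)

end SelfSimilar

section Abelianization

open scoped commutatorElement

variable {p : ℕ} [NeZero p] {e : Fin (p - 1) → ZMod p}

def secShiftSum (f : ↥(AutT p)) : ZMod p := ∑ x, shift (sec f x)

lemma isAddOn_secShiftSum : IsAddOn (GGS p e) secShiftSum := isAddOn_shift.sum_sec

lemma shift_sec_bZ (c x : ZMod p) : shift (sec (bZ p e c) x) = c * bExp e x := by
  rw [sec_bZ]
  split_ifs with hx
  · rw [(hasShift_bZ c).shift_eq, hx, bExp_zero, mul_zero]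
  · exact (hasShift_aZ _).shift_eq

lemma secShiftSum_aZ (c : ZMod p) : secShiftSum (aZ p c) = 0 := by
  simp only [secShiftSum, sec_aZ, hasShift_one.shift_eq, Finset.sum_const_zero]

lemma secShiftSum_one : secShiftSum (1 : ↥(AutT p)) = 0 :=
  aZ_zero (p := p) ▸ secShiftSum_aZ 0

lemma secShiftSum_bZ (c : ZMod p) : secShiftSum (bZ p e c) = c * ∑ i, e i := by
  simp only [secShiftSum, shift_sec_bZ, ← Finset.mul_sum, sum_bExp]

lemma sum_secShiftSum_sec {g : ↥(AutT p)} (hg : g ∈ GGS p e) :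
    ∑ x, secShiftSum (sec g x) = secShiftSum g := by
  refine isAddOn_secShiftSum.sum_sec.eqOn_closure isAddOn_secShiftSum ?_ hg
  rintro _ (rfl | rfl)
  · simp only [← aZ_one, sec_aZ, secShiftSum_one, secShiftSum_aZ, Finset.sum_const_zero]
  · simp only [← bZ_one, sec_bZ, apply_ite secShiftSum, secShiftSum_bZ, secShiftSum_aZ,
      Finset.sum_ite_eq', Finset.mem_univ, if_true]

lemma exists_mul_inv_mem_commutator {w : ↥(AutT p)} (hw : w ∈ GGS p e) :
    ∃ A B, w * (aZ p A * bZ p e B)⁻¹ ∈ ⁅GGS p e, GGS p e⁆ := by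
  refine induction_on hw ⟨0, 0, by simp [aZ_zero, bZ_zero]⟩ ?_ ?_
  · rintro c y - ⟨A, B, hy⟩
    refine ⟨c + A, B, ?_⟩
    rw [aZ_add, show aZ p c * y * (aZ p c * aZ p A * bZ p e B)⁻¹ =
      aZ p c * (y * (aZ p A * bZ p e B)⁻¹) * (aZ p c)⁻¹ by group]
    exact conj_mem_commutator (aZ_mem c) hy
  · rintro c y - ⟨A, B, hy⟩
    refine ⟨A, c + B, ?_⟩
    rw [bZ_add, show bZ p e c * y * (aZ p A * (bZ p e c * bZ p e B))⁻¹ =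
      bZ p e c * (y * (aZ p A * bZ p e B)⁻¹) * (bZ p e c)⁻¹ * ⁅bZ p e c, aZ p A⁆ by group]
    exact mul_mem (conj_mem_commutator (bZ_mem c) hy)
      (Subgroup.commutator_mem_commutator (bZ_mem c) (aZ_mem A))

lemma shift_eq_and_secShiftSum_eq {w : ↥(AutT p)} {A B : ZMod p}
    (hw : w * (aZ p A * bZ p e B)⁻¹ ∈ ⁅GGS p e, GGS p e⁆) :
    shift w = A ∧ secShiftSum w = B * ∑ i, e i := by
  have hab : aZ p A * bZ p e B ∈ GGS p e := mul_mem (aZ_mem A) (bZ_mem B)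
  constructor
  · rw [isAddOn_shift.eq_of_mul_inv_mem_commutator hab hw,
      isAddOn_shift _ (aZ_mem A) _ (bZ_mem B), (hasShift_aZ A).shift_eq,
      (hasShift_bZ B).shift_eq, add_zero]
  · rw [isAddOn_secShiftSum.eq_of_mul_inv_mem_commutator hab hw,
      isAddOn_secShiftSum _ (aZ_mem A) _ (bZ_mem B), secShiftSum_aZ, secShiftSum_bZ, zero_add]

end Abelianization

section Length

variable {p : ℕ} [NeZero p] {e : Fin (p - 1) → ZMod p}

/-- The word `b^{β_1} a^{α_1} ⋯ b^{β_m} a^{α_m}` encoded by the list of pairs `(β_k, α_k)`. -/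
def wordProd (e : Fin (p - 1) → ZMod p) (L : List (ZMod p × ZMod p)) : ↥(AutT p) :=
  (L.map fun q => bZ p e q.1 * aZ p q.2).prod

lemma wordProd_nil : wordProd e [] = 1 := rfl

lemma wordProd_cons (q : ZMod p × ZMod p) (L : List (ZMod p × ZMod p)) :
    wordProd e (q :: L) = bZ p e q.1 * aZ p q.2 * wordProd e L := List.prod_cons

lemma wordProd_append (L M : List (ZMod p × ZMod p)) :
    wordProd e (L ++ M) = wordProd e L * wordProd e M := by
  rw [wordProd, List.map_append, List.prod_append, wordProd, wordProd]

lemma wordProd_mem (L : List (ZMod p × ZMod p)) : wordProd e L ∈ GGS p e :=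
  Subgroup.list_prod_mem _ fun _ hq => by
    obtain ⟨q, -, rfl⟩ := List.mem_map.mp hq
    exact mul_mem (bZ_mem q.1) (aZ_mem q.2)

def wordLengths (e : Fin (p - 1) → ZMod p) (g : ↥(AutT p)) : Set ℕ :=
  {m | ∃ α L, L.length = m ∧ g = aZ p α * wordProd e L}

lemma glen_eq_sInf (g : ↥(AutT p)) : glen p e g = sInf (wordLengths e g) := by
  rw [glen]
  congr 1
  ext m
  constructor
  · rintro ⟨α, β, rfl⟩
    refine ⟨α 0, List.ofFn fun i => (β i, α i.succ), List.length_ofFn, ?_⟩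
    rw [wordProd, List.map_ofFn]
    rfl
  · rintro ⟨α₀, L, rfl, rfl⟩
    refine ⟨Fin.cons α₀ fun i => L[i].2, fun i => L[i].1, ?_⟩
    simp only [Fin.cons_zero, Fin.cons_succ, wordProd, ← List.ofFn_getElem_eq_map]
    rfl

lemma glen_le {g : ↥(AutT p)} {α : ZMod p} {L : List (ZMod p × ZMod p)}
    (h : g = aZ p α * wordProd e L) : glen p e g ≤ L.length := by
  rw [glen_eq_sInf]
  exact Nat.sInf_le ⟨α, L, rfl, h⟩

lemma exists_eq_aZ_mul_wordProd {g : ↥(AutT p)} (hg : g ∈ GGS p e) :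
    ∃ α L, g = aZ p α * wordProd e L := by
  refine induction_on hg ?_ ?_ ?_
  · exact ⟨0, [], by rw [aZ_zero, wordProd_nil, mul_one]⟩
  · rintro c y - ⟨α, L, rfl⟩
    exact ⟨c + α, L, by rw [aZ_add, mul_assoc]⟩
  · rintro c y - ⟨α, L, rfl⟩
    exact ⟨0, (c, α) :: L, by rw [aZ_zero, one_mul, wordProd_cons, mul_assoc]⟩

lemma exists_length_eq_glen {g : ↥(AutT p)} (hg : g ∈ GGS p e) :
    ∃ α L, L.length = glen p e g ∧ g = aZ p α * wordProd e L := by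
  obtain ⟨α, L, h⟩ := exists_eq_aZ_mul_wordProd hg
  have hmem : sInf (wordLengths e g) ∈ wordLengths e g := Nat.sInf_mem ⟨L.length, α, L, rfl, h⟩
  rwa [← glen_eq_sInf] at hmem

lemma wordProd_mul_aZ (L : List (ZMod p × ZMod p)) (c : ZMod p) :
    ∃ d M, M.length = L.length ∧ wordProd e L * aZ p c = aZ p d * wordProd e M := by
  induction L generalizing c with
  | nil => exact ⟨c, [], rfl, by rw [wordProd_nil, one_mul, mul_one]⟩
  | cons q L ih =>
    obtain ⟨d, M, hM, h⟩ := ih c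
    refine ⟨0, (q.1, q.2 + d) :: M, by rw [List.length_cons, hM, List.length_cons], ?_⟩
    rw [wordProd_cons, wordProd_cons, mul_assoc, h, aZ_zero, one_mul, aZ_add]
    group

lemma glen_mul_le {f g : ↥(AutT p)} (hf : f ∈ GGS p e) (hg : g ∈ GGS p e) :
    glen p e (f * g) ≤ glen p e f + glen p e g := by
  obtain ⟨α, L, hL, rfl⟩ := exists_length_eq_glen hf
  obtain ⟨β, M, hM, rfl⟩ := exists_length_eq_glen hg
  obtain ⟨d, L', hL', h⟩ := wordProd_mul_aZ (e := e) L β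
  rw [← hL, ← hM, ← hL', ← List.length_append]
  refine glen_le (α := α + d) ?_
  rw [aZ_add, wordProd_append, ← mul_assoc, mul_assoc (aZ p α), h]
  group

lemma glen_aZ (c : ZMod p) : glen p e (aZ p c) = 0 :=
  Nat.le_zero.mp (glen_le (L := []) (mul_one _).symm)

lemma glen_one : glen p e 1 = 0 := aZ_zero (p := p) ▸ glen_aZ 0

lemma glen_bZ_le (c : ZMod p) : glen p e (bZ p e c) ≤ 1 :=
  glen_le (α := 0) (L := [(c, 0)]) (by rw [wordProd_cons, wordProd_nil, aZ_zero]; group)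

end Length

section SectionLength

variable {p : ℕ} [NeZero p] {e : Fin (p - 1) → ZMod p}

lemma sum_glen_sec_bZ_le (c : ZMod p) : ∑ x, glen p e (sec (bZ p e c) x) ≤ 1 := by
  simp only [sec_bZ, apply_ite (glen p e), glen_aZ, Finset.sum_ite_eq', Finset.mem_univ, if_true]
  exact glen_bZ_le c

lemma sum_glen_sec_wordProd_le (L : List (ZMod p × ZMod p)) :
    ∑ x, glen p e (sec (wordProd e L) x) ≤ L.length := by
  induction L with
  | nil => simp only [wordProd_nil, sec_one, glen_one, Finset.sum_const_zero, List.length_nil,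
      le_refl]
  | cons q L ih =>
    have hw : aZ p q.2 * wordProd e L ∈ GGS p e := mul_mem (aZ_mem _) (wordProd_mem L)
    set d := shift (aZ p q.2 * wordProd e L)
    calc ∑ x, glen p e (sec (wordProd e (q :: L)) x)
        = ∑ x, glen p e (sec (bZ p e q.1) (x + d) * sec (wordProd e L) x) := by
          simp only [wordProd_cons, mul_assoc, sec_mul _ (hasShift_shift hw),
            sec_aZ_mul _ (wordProd_mem L), d]
      _ ≤ ∑ x, (glen p e (sec (bZ p e q.1) (x + d)) + glen p e (sec (wordProd e L) x)) :=
          Finset.sum_le_sum fun x _ => glen_mul_le (sec_bZ_mem _ _) (sec_mem (wordProd_mem L) x)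
      _ = ∑ x, glen p e (sec (bZ p e q.1) x) + ∑ x, glen p e (sec (wordProd e L) x) := by
          rw [Finset.sum_add_distrib]
          congr 1
          exact Equiv.sum_comp (Equiv.addRight d) fun x => glen p e (sec (bZ p e q.1) x)
      _ ≤ (q :: L).length := by
          rw [List.length_cons, add_comm L.length]
          exact add_le_add (sum_glen_sec_bZ_le q.1) ih

lemma sum_glen_sec_le {g : ↥(AutT p)} (hg : g ∈ GGS p e) :
    ∑ x, glen p e (sec g x) ≤ glen p e g := by
  obtain ⟨α, L, hL, rfl⟩ := exists_length_eq_glen hg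
  simp only [sec_aZ_mul α (wordProd_mem L)]
  exact hL ▸ sum_glen_sec_wordProd_le L

end SectionLength

section Powers

variable {p : ℕ} [NeZero p] {e : Fin (p - 1) → ZMod p}

lemma IsAddOn.apply_sec_pow {M : Type*} [AddCommGroup M] {φ : ↥(AutT p) → M}
    (hφ : IsAddOn (GGS p e) φ) {g : ↥(AutT p)} (hg : g ∈ GGS p e) (n : ℕ) (u : ZMod p) :
    φ (sec (g ^ n) u) = ∑ k ∈ Finset.range n, φ (sec g (u + k • shift g)) := by
  induction n with
  | zero => rw [pow_zero, sec_one, hφ.map_one, Finset.sum_range_zero]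
  | succ n ih =>
    rw [sec_pow_succ (hasShift_shift hg), hφ _ (sec_mem hg _) _ (sec_mem (pow_mem hg n) u), ih,
      Finset.sum_range_succ, add_comm (Finset.sum _ _)]

lemma glen_sec_pow_le {g : ↥(AutT p)} (hg : g ∈ GGS p e) (n : ℕ) (u : ZMod p) :
    glen p e (sec (g ^ n) u) ≤ ∑ k ∈ Finset.range n, glen p e (sec g (u + k • shift g)) := by
  induction n with
  | zero => rw [pow_zero, sec_one, glen_one]; exact Nat.zero_le _
  | succ n ih =>
    rw [sec_pow_succ (hasShift_shift hg), Finset.sum_range_succ, add_comm (Finset.sum _ _)]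
    exact (glen_mul_le (sec_mem hg _) (sec_mem (pow_mem hg n) u)).trans (add_le_add le_rfl ih)

end Powers

lemma sum_range_add_nsmul {p : ℕ} [Fact p.Prime] {M : Type*} [AddCommMonoid M] (F : ZMod p → M)
    (u : ZMod p) {c : ZMod p} (hc : c ≠ 0) : ∑ k ∈ Finset.range p, F (u + k • c) = ∑ x, F x := by
  calc ∑ k ∈ Finset.range p, F (u + k • c) = ∑ x : ZMod p, F (u + x * c) := by
        refine Finset.sum_nbij' (fun k => (k : ZMod p)) ZMod.val (by simp)
          (fun x _ => Finset.mem_range.mpr (ZMod.val_lt x))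
          (fun k hk => ZMod.val_cast_of_lt (Finset.mem_range.mp hk))
          (fun x _ => ZMod.natCast_zmod_val x) (fun k _ => by rw [nsmul_eq_mul])
    _ = ∑ x, F x := ((Equiv.mulRight₀ c hc).trans (Equiv.addLeft u)).sum_comp F

section PrimePowers

variable {p : ℕ} [Fact p.Prime] {e : Fin (p - 1) → ZMod p}

lemma HasShift.fixesLevelOne_pow {g : ↥(AutT p)} {c : ZMod p} (hg : HasShift g c) :
    FixesLevelOne p (g ^ p) := fun x => by
  rw [hg.pow p x, nsmul_eq_mul, ZMod.natCast_self, zero_mul, add_zero]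

lemma IsAddOn.apply_sec_pow_prime {M : Type*} [AddCommGroup M] {φ : ↥(AutT p) → M}
    (hφ : IsAddOn (GGS p e) φ) {g : ↥(AutT p)} (hg : g ∈ GGS p e) (hc : shift g ≠ 0)
    (u : ZMod p) : φ (sec (g ^ p) u) = ∑ x, φ (sec g x) := by
  rw [hφ.apply_sec_pow hg, sum_range_add_nsmul (fun x => φ (sec g x)) u hc]

lemma glen_sec_pow_prime_le {g : ↥(AutT p)} (hg : g ∈ GGS p e) (hc : shift g ≠ 0) (u : ZMod p) :
    glen p e (sec (g ^ p) u) ≤ ∑ x, glen p e (sec g x) :=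
  (glen_sec_pow_le hg p u).trans_eq (sum_range_add_nsmul (fun x => glen p e (sec g x)) u hc)

end PrimePowers

end GGS

theorem ggs_power_p_propagates_general
    (p : ℕ) [Fact p.Prime]
    (e : Fin (p - 1) → ZMod p) (hlam : ∑ i, e i ≠ 0)
    (g : ↥(AutT p)) (hg : g ∈ GGS p e)
    (i j : ZMod p) (hi : i ≠ 0)
    (hgij : g * (aZ p i * bZ p e j)⁻¹ ∈ ⁅GGS p e, GGS p e⁆) :
    FixesLevelOne p (g ^ p) ∧
    ∀ u : ZMod p,
      sectionAt p (g ^ p) [u] * (aZ p ((∑ i, e i) * j) * bZ p e j)⁻¹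
          ∈ ⁅GGS p e, GGS p e⁆ ∧
      glen p e (sectionAt p (g ^ p) [u])
          ≤ ∑ x : ZMod p, glen p e (sectionAt p ((aZ p i)⁻¹ * g) [x]) ∧
      (∑ x : ZMod p, glen p e (sectionAt p ((aZ p i)⁻¹ * g) [x])) ≤ glen p e g := by
  obtain ⟨hshift, hsum⟩ := GGS.shift_eq_and_secShiftSum_eq hgij
  have hshift_ne : GGS.shift g ≠ 0 := hshift ▸ hi
  have hsec : ∀ x, sectionAt p ((aZ p i)⁻¹ * g) [x] = GGS.sec g x := fun x => by
    rw [← GGS.aZ_neg]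
    exact GGS.sec_aZ_mul _ hg x
  refine ⟨(GGS.hasShift_shift hg).fixesLevelOne_pow, fun u => ⟨?_, ?_, ?_⟩⟩
  · obtain ⟨A, B, hAB⟩ := GGS.exists_mul_inv_mem_commutator (GGS.sec_mem (pow_mem hg p) u)
    obtain ⟨hA, hB⟩ := GGS.shift_eq_and_secShiftSum_eq hAB
    rw [GGS.isAddOn_shift.apply_sec_pow_prime hg hshift_ne] at hA
    rw [GGS.isAddOn_secShiftSum.apply_sec_pow_prime hg hshift_ne,
      GGS.sum_secShiftSum_sec hg] at hB
    obtain rfl : A = (∑ i, e i) * j := hA.symm.trans (hsum.trans (mul_comm _ _))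
    obtain rfl : B = j := mul_right_cancel₀ hlam (hB.symm.trans hsum)
    exact hAB
  · simp only [hsec]
    exact GGS.glen_sec_pow_prime_le hg hshift_ne u
  · simp only [hsec]
    exact GGS.sum_glen_sec_le hg

/-- **Lemma 5.3.** Let `G` be a non-torsion GGS-group with `λ = e₁ + ⋯ + e_{p-1}`, and
let `g ∈ G` with `g ≡_{G'} a^i b^j`, `i ≠ 0`; write `g = a^i · ψ⁻¹((g_1, …, g_p))`
(so `g_u = φ_u(a^{-i} g)`). Then `g^p ∈ st_G(1)` and, for all `u ∈ X`,
`φ_u(g^p) ≡_{G'} a^{λj} b^j` with `|φ_u(g^p)| ≤ |g_1| + ⋯ + |g_p| ≤ |g|`. -/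
theorem ggs_power_p_propagates
    (p : ℕ) [Fact p.Prime] (hodd : Odd p)
    (e : Fin (p - 1) → ZMod p) (he : e ≠ 0) (hlam : ∑ i, e i ≠ 0)
    (g : ↥(AutT p)) (hg : g ∈ GGS p e)
    (i j : ZMod p) (hi : i ≠ 0)
    (hgij : g * (aZ p i * bZ p e j)⁻¹ ∈ ⁅GGS p e, GGS p e⁆) :
    FixesLevelOne p (g ^ p) ∧
    ∀ u : ZMod p,
      sectionAt p (g ^ p) [u] * (aZ p ((∑ i, e i) * j) * bZ p e j)⁻¹
          ∈ ⁅GGS p e, GGS p e⁆ ∧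
      glen p e (sectionAt p (g ^ p) [u])
          ≤ ∑ x : ZMod p, glen p e (sectionAt p ((aZ p i)⁻¹ * g) [x]) ∧
      (∑ x : ZMod p, glen p e (sectionAt p ((aZ p i)⁻¹ * g) [x])) ≤ glen p e g :=
  ggs_power_p_propagates_general p e hlam g hg i j hi hgij
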